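/- arXiv:2505.00517 — 2 statements merged into one kernel-verified Lean document; each statement's English description precedes it below -/
import Mathlib

section
/- Let n ≥ 2 be an integer and α_max = (1/(n+1))(n/(n+1))ⁿ. The map α ↦ c_α = (n+1)u_α² - n, where u_α is the largest root of V_α(u) = u² - 1 + α u^{-2n}, is a strictly decreasing bijection from (-∞, α_max] onto [0, ∞), with c_0 = 1. -/
/-!
For `u > 0`, `u` is a root of `V_α` exactly when `α = u²ⁿ(1 - u²)`. This function of `u` has its
only critical point on `(0, ∞)` at `u₀ = √(n/(n+1))`, where it takes the value `α_max`, and it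
decreases from there to `-∞`. Hence for `α ≤ α_max` the largest root `u_α` is its inverse on
`[u₀, ∞)`: a decreasing bijection `(-∞, α_max] → [u₀, ∞)` with `u_0 = 1`. Finally
`u ↦ (n+1)u² - n` maps `[u₀, ∞)` increasingly onto `[0, ∞)`.
-/

open Set

theorem StrictAntiOn.strictAntiOn_of_leftInvOn {α β : Type*} [LinearOrder α] [LinearOrder β]
    {f : α → β} {g : β → α} {s : Set α} {t : Set β} (hf : StrictAntiOn f s)
    (hfg : LeftInvOn f g t) (hg : MapsTo g t s) : StrictAntiOn g t := fun a ha b hb hab => by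
  by_contra! h
  have := hf.antitoneOn (hg ha) (hg hb) h
  rw [hfg ha, hfg hb] at this
  exact hab.not_ge this

/-- `u^(2n) V_α(u) = α - rootParam n u`. -/
def rootParam (n : ℕ) (u : ℝ) : ℝ := u ^ (2 * n) * (1 - u ^ 2)

lemma sq_sub_one_add_div_eq_zero_iff {n : ℕ} {u : ℝ} (α : ℝ) (hu : 0 < u) :
    u ^ 2 - 1 + α / u ^ (2 * n) = 0 ↔ rootParam n u = α := by
  have hu' : u ^ (2 * n) ≠ 0 := by positivity
  rw [rootParam, ← sub_eq_zero (b := α), ← mul_eq_zero_iff_left hu', mul_add,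
    mul_div_cancel₀ _ hu']
  constructor <;> intro h <;> linear_combination -h

lemma rootParam_one (n : ℕ) : rootParam n 1 = 0 := by simp [rootParam]

lemma rootParam_sqrt (n : ℕ) :
    rootParam n √(n / (n + 1)) = 1 / ((n : ℝ) + 1) * ((n : ℝ) / (n + 1)) ^ n := by
  have hsq : √((n : ℝ) / (n + 1)) ^ 2 = n / (n + 1) := Real.sq_sqrt (by positivity)
  rw [rootParam, pow_mul, hsq]
  field_simp
  ring

lemma hasDerivAt_rootParam (n : ℕ) {u : ℝ} (hu : u ≠ 0) :
    HasDerivAt (rootParam n) (2 * u ^ (2 * n) / u * (n - (n + 1) * u ^ 2)) u := by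
  refine ((hasDerivAt_pow (2 * n) u).fun_mul ((hasDerivAt_pow 2 u).const_sub 1)).congr_deriv ?_
  rcases n with _ | n
  · field_simp
    ring
  · rw [show 2 * (n + 1) = 2 * n + 1 + 1 by ring, pow_succ]
    field_simp
    push_cast
    ring

lemma strictAntiOn_rootParam (n : ℕ) : StrictAntiOn (rootParam n) (Ici √(n / (n + 1))) := by
  refine strictAntiOn_of_deriv_neg (convex_Ici _) (by unfold rootParam; fun_prop) fun u hu => ?_
  rw [interior_Ici, mem_Ioi] at hu
  have hu0 : 0 < u := (Real.sqrt_nonneg _).trans_lt hu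
  rw [Real.sqrt_lt' hu0, div_lt_iff₀ (by positivity)] at hu
  rw [(hasDerivAt_rootParam n hu0.ne').deriv]
  exact mul_neg_of_pos_of_neg (by positivity) (by linarith)

lemma mapsTo_rootParam (n : ℕ) :
    MapsTo (rootParam n) (Ici √(n / (n + 1))) (Iic (1 / ((n : ℝ) + 1) * ((n : ℝ) / (n + 1)) ^ n)) :=
  fun _ hu => rootParam_sqrt n ▸ (strictAntiOn_rootParam n).antitoneOn self_mem_Ici hu hu

lemma exists_sqrt_le_rootParam_eq {n : ℕ} {α : ℝ}
    (hα : α ≤ 1 / ((n : ℝ) + 1) * ((n : ℝ) / (n + 1)) ^ n) :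
    ∃ u, √(n / (n + 1)) ≤ u ∧ rootParam n u = α := by
  set M := 1 + |α|
  have hM : 1 ≤ M := le_add_of_nonneg_right (abs_nonneg α)
  have hle : √((n : ℝ) / (n + 1)) ≤ M :=
    (Real.sqrt_le_one.mpr ((div_le_one (by positivity)).mpr (by linarith))).trans hM
  have hMα : rootParam n M ≤ α := by
    have hpow := one_le_pow₀ (n := 2 * n) hM
    unfold rootParam
    nlinarith [neg_abs_le α,
      mul_nonneg (sub_nonneg.2 hpow) (sub_nonneg.2 (one_le_pow₀ (n := 2) hM))]
  obtain ⟨u, hu, hu'⟩ := intermediate_value_Icc' hle (by unfold rootParam; fun_prop)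
    ⟨hMα, (rootParam_sqrt n).symm ▸ hα⟩
  exact ⟨u, hu.1, hu'⟩

lemma sqrt_le_and_rootParam_eq_of_isGreatest {n : ℕ} (hn : 0 < n) {α u : ℝ}
    (hα : α ≤ 1 / ((n : ℝ) + 1) * ((n : ℝ) / (n + 1)) ^ n)
    (hu : IsGreatest {u : ℝ | 0 < u ∧ u ^ 2 - 1 + α / u ^ (2 * n) = 0} u) :
    √(n / (n + 1)) ≤ u ∧ rootParam n u = α := by
  obtain ⟨v, hv, hvα⟩ := exists_sqrt_le_rootParam_eq hα
  have hv0 : 0 < v := (Real.sqrt_pos.2 (by positivity)).trans_le hv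
  have hvu : v ≤ u := hu.2 ⟨hv0, (sq_sub_one_add_div_eq_zero_iff α hv0).2 hvα⟩
  exact ⟨hv.trans hvu, (sq_sub_one_add_div_eq_zero_iff α hu.1.1).1 hu.1.2⟩

def coneAngle (n : ℕ) (u : ℝ) : ℝ := (n + 1) * u ^ 2 - n

lemma strictMonoOn_coneAngle (n : ℕ) : StrictMonoOn (coneAngle n) (Ici 0) :=
  fun u hu v _ huv => by
    have := pow_lt_pow_left₀ huv hu two_ne_zero
    unfold coneAngle
    gcongr

lemma image_coneAngle_Ici_sqrt (n : ℕ) : coneAngle n '' Ici √(n / (n + 1)) = Ici 0 := by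
  have hn : (0 : ℝ) < n + 1 := by positivity
  ext c
  constructor
  · rintro ⟨u, hu, rfl⟩
    have := pow_le_pow_left₀ (Real.sqrt_nonneg _) hu 2
    rw [Real.sq_sqrt (by positivity), div_le_iff₀ hn] at this
    rw [mem_Ici, coneAngle]
    linarith
  · intro (hc : 0 ≤ c)
    refine ⟨√((n + c) / (n + 1)),
      Real.sqrt_le_sqrt (by gcongr; exact le_add_of_nonneg_right hc), ?_⟩
    rw [coneAngle, Real.sq_sqrt (by positivity)]
    field_simp
    ring

/-- The map `α ↦ c_α = (n+1)u_α² - n`, where `u_α` is the largest root of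
`V_α(u) = u² - 1 + α u^(-2n)`, is a strictly decreasing bijection from
`(-∞, α_max]` onto `[0, ∞)` with `c_0 = 1`. -/
theorem stmt6 (n : ℕ) (hn : 2 ≤ n) (U : ℝ → ℝ)
    (hU : ∀ α ≤ (1 / ((n : ℝ) + 1)) * ((n : ℝ) / (n + 1)) ^ n,
      IsGreatest {u : ℝ | 0 < u ∧ u ^ 2 - 1 + α / u ^ (2 * n) = 0} (U α)) :
    StrictAntiOn (fun α : ℝ => ((n : ℝ) + 1) * (U α) ^ 2 - n)
        (Set.Iic ((1 / ((n : ℝ) + 1)) * ((n : ℝ) / (n + 1)) ^ n)) ∧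
    (fun α : ℝ => ((n : ℝ) + 1) * (U α) ^ 2 - n) ''
        (Set.Iic ((1 / ((n : ℝ) + 1)) * ((n : ℝ) / (n + 1)) ^ n)) = Set.Ici (0 : ℝ) ∧
    ((n : ℝ) + 1) * (U 0) ^ 2 - n = 1 := by
  set αmax := (1 / ((n : ℝ) + 1)) * ((n : ℝ) / (n + 1)) ^ n
  have hroot α (hα : α ∈ Iic αmax) :=
    sqrt_le_and_rootParam_eq_of_isGreatest (by omega) hα (hU α hα)
  have hmaps : MapsTo U (Iic αmax) (Ici √(n / (n + 1))) := fun α hα => (hroot α hα).1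
  have hinv : LeftInvOn (rootParam n) U (Iic αmax) := fun α hα => (hroot α hα).2
  have h0 : (0 : ℝ) ∈ Iic αmax := mem_Iic.2 (by positivity)
  have hU0 : U 0 = 1 := (strictAntiOn_rootParam n).injOn (hmaps h0)
    (Real.sqrt_le_one.2 (div_le_one_of_le₀ (by linarith) (by positivity)))
    ((hinv h0).trans (rootParam_one n).symm)
  have hUanti : StrictAntiOn U (Iic αmax) :=
    (strictAntiOn_rootParam n).strictAntiOn_of_leftInvOn hinv hmaps
  have hUbij : BijOn U (Iic αmax) (Ici √(n / (n + 1))) :=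
    InvOn.bijOn ⟨hinv, (strictAntiOn_rootParam n).injOn.rightInvOn_of_leftInvOn hinv
      (mapsTo_rootParam n) hmaps⟩ hmaps (mapsTo_rootParam n)
  refine ⟨?_, ?_, by rw [hU0]; ring⟩
  · have hc : StrictMonoOn (coneAngle n) (Ici √(n / (n + 1))) :=
      (strictMonoOn_coneAngle n).mono (Ici_subset_Ici.2 (Real.sqrt_nonneg _))
    exact hc.comp_strictAntiOn hUanti hmaps
  · rw [← image_coneAngle_Ici_sqrt n, ← hUbij.image_eq, ← image_comp]
    rfl
end

section
/- Let n ≥ 2, α ∈ (0, α_max) with α_max = (1/(n+1))(n/(n+1))ⁿ, and u ≥ u_α the domain of the model metric. For all real numbers a₁, a₅, b₁, b₂, b₃, b₅, b₆ with a₁² + a₅² = 1, b₁² + b₂² + b₃² + b₅² + b₆² = 1, and a₁b₁ + a₅b₅ = 0, setting P = α/u^{2n+2}, the quantity K = (4a₁²b₂² + a₁²b₃²)(-1 - P) + ((a₁b₅ - a₅b₁)² + a₁²b₆² + a₅²b₂² + a₅²b₃²)(-1 + nP) + a₅²b₆²(-4 - 2n(n-1)P) + 6a₁a₅b₂b₆(-1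 + nP) satisfies -4 - 2n(n-1)P ≤ K ≤ -1 + nP, and in particular K < 0. -/
lemma key_upper (N p a₁ a₅ b₁ b₂ b₃ b₅ b₆ : ℝ)
    (ha : a₁ ^ 2 + a₅ ^ 2 = 1)
    (hb : b₁ ^ 2 + b₂ ^ 2 + b₃ ^ 2 + b₅ ^ 2 + b₆ ^ 2 = 1)
    (hab : a₁ * b₁ + a₅ * b₅ = 0) :
    (-1 + N * p) -
    ((4 * a₁ ^ 2 * b₂ ^ 2 + a₁ ^ 2 * b₃ ^ 2) * (-1 - p)
      + ((a₁ * b₅ - a₅ * b₁) ^ 2 + a₁ ^ 2 * b₆ ^ 2 + a₅ ^ 2 * b₂ ^ 2 + a₅ ^ 2 * b₃ ^ 2)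
          * (-1 + N * p)
      + a₅ ^ 2 * b₆ ^ 2 * (-4 - 2 * N * (N - 1) * p)
      + 6 * a₁ * a₅ * b₂ * b₆ * (-1 + N * p)) =
    3 * (1 - N * p) * (a₁ * b₂ + a₅ * b₆) ^ 2
      + (2 * N ^ 2 + 2 * N) * p * (a₅ * b₆) ^ 2
      + (1 + N) * p * (4 * a₁ ^ 2 * b₂ ^ 2 + a₁ ^ 2 * b₃ ^ 2) := by
  linear_combination (-(-1 + N * p) * (b₁ ^ 2 + b₂ ^ 2 + b₃ ^ 2 + b₅ ^ 2 + b₆ ^ 2)) * ha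
    + (-(-1 + N * p)) * hb + ((-1 + N * p) * (a₁ * b₁ + a₅ * b₅)) * hab

lemma key_lower (N p a₁ a₅ b₁ b₂ b₃ b₅ b₆ : ℝ)
    (ha : a₁ ^ 2 + a₅ ^ 2 = 1)
    (hb : b₁ ^ 2 + b₂ ^ 2 + b₃ ^ 2 + b₅ ^ 2 + b₆ ^ 2 = 1)
    (hab : a₁ * b₁ + a₅ * b₅ = 0) :
    ((4 * a₁ ^ 2 * b₂ ^ 2 + a₁ ^ 2 * b₃ ^ 2) * (-1 - p)
      + ((a₁ * b₅ - a₅ * b₁) ^ 2 + a₁ ^ 2 * b₆ ^ 2 + a₅ ^ 2 * b₂ ^ 2 + a₅ ^ 2 * b₃ ^ 2)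
          * (-1 + N * p)
      + a₅ ^ 2 * b₆ ^ 2 * (-4 - 2 * N * (N - 1) * p)
      + 6 * a₁ * a₅ * b₂ * b₆ * (-1 + N * p)) -
    (-4 - 2 * N * (N - 1) * p) =
    3 * (1 - N * p) * (a₁ * b₆ - a₅ * b₂) ^ 2
      + (2 * N ^ 2 - 2 * N - 4) * p * (a₁ * b₂) ^ 2
      + (3 + (2 * N ^ 2 - 2 * N - 1) * p) * (a₁ * b₃) ^ 2
      + (3 + (2 * N ^ 2 - N) * p) * ((a₁ * b₅ - a₅ * b₁) ^ 2 + (a₅ * b₃) ^ 2)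
      + (2 * N ^ 2 + 2 * N) * p * ((a₁ * b₆) ^ 2 + (a₅ * b₂) ^ 2) := by
  linear_combination ((-4 - 2 * N * (N - 1) * p) * (b₁ ^ 2 + b₂ ^ 2 + b₃ ^ 2 + b₅ ^ 2 + b₆ ^ 2)) * ha
    + (-4 - 2 * N * (N - 1) * p) * hb
    + (-(-4 - 2 * N * (N - 1) * p) * (a₁ * b₁ + a₅ * b₅)) * hab

set_option maxHeartbeats 1000000 in
/-- Pinching bounds for the sectional curvature of a general 2-plane in the model
Einstein metric, expressed in the adapted orthonormal frame: with `P = α/u^(2n+2)`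
satisfying `0 < nP < 1` and the frame coefficient constraints, the curvature `K`
satisfies `-4 - 2n(n-1)P ≤ K ≤ -1 + nP` and `K < 0`. -/
theorem stmt13 (n : ℕ) (hn : 2 ≤ n) (α u uα : ℝ)
    (hα0 : 0 < α) (hα : α < (1 / ((n : ℝ) + 1)) * ((n : ℝ) / (n + 1)) ^ n)
    (huα : Real.sqrt ((n : ℝ) / (n + 1)) ≤ uα) (hu : uα ≤ u)
    (a₁ a₅ b₁ b₂ b₃ b₅ b₆ : ℝ)
    (ha : a₁ ^ 2 + a₅ ^ 2 = 1)
    (hb : b₁ ^ 2 + b₂ ^ 2 + b₃ ^ 2 + b₅ ^ 2 + b₆ ^ 2 = 1)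
    (hab : a₁ * b₁ + a₅ * b₅ = 0) :
    (-4 - 2 * (n : ℝ) * ((n : ℝ) - 1) * (α / u ^ (2 * n + 2)) ≤
      (4 * a₁ ^ 2 * b₂ ^ 2 + a₁ ^ 2 * b₃ ^ 2) * (-1 - α / u ^ (2 * n + 2))
      + ((a₁ * b₅ - a₅ * b₁) ^ 2 + a₁ ^ 2 * b₆ ^ 2 + a₅ ^ 2 * b₂ ^ 2 + a₅ ^ 2 * b₃ ^ 2)
          * (-1 + (n : ℝ) * (α / u ^ (2 * n + 2)))
      + a₅ ^ 2 * b₆ ^ 2 * (-4 - 2 * (n : ℝ) * ((n : ℝ) - 1) * (α / u ^ (2 * n + 2)))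
      + 6 * a₁ * a₅ * b₂ * b₆ * (-1 + (n : ℝ) * (α / u ^ (2 * n + 2)))) ∧
    ((4 * a₁ ^ 2 * b₂ ^ 2 + a₁ ^ 2 * b₃ ^ 2) * (-1 - α / u ^ (2 * n + 2))
      + ((a₁ * b₅ - a₅ * b₁) ^ 2 + a₁ ^ 2 * b₆ ^ 2 + a₅ ^ 2 * b₂ ^ 2 + a₅ ^ 2 * b₃ ^ 2)
          * (-1 + (n : ℝ) * (α / u ^ (2 * n + 2)))
      + a₅ ^ 2 * b₆ ^ 2 * (-4 - 2 * (n : ℝ) * ((n : ℝ) - 1) * (α / u ^ (2 * n + 2)))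
      + 6 * a₁ * a₅ * b₂ * b₆ * (-1 + (n : ℝ) * (α / u ^ (2 * n + 2)))
      ≤ -1 + (n : ℝ) * (α / u ^ (2 * n + 2))) ∧
    ((4 * a₁ ^ 2 * b₂ ^ 2 + a₁ ^ 2 * b₃ ^ 2) * (-1 - α / u ^ (2 * n + 2))
      + ((a₁ * b₅ - a₅ * b₁) ^ 2 + a₁ ^ 2 * b₆ ^ 2 + a₅ ^ 2 * b₂ ^ 2 + a₅ ^ 2 * b₃ ^ 2)
          * (-1 + (n : ℝ) * (α / u ^ (2 * n + 2)))
      + a₅ ^ 2 * b₆ ^ 2 * (-4 - 2 * (n : ℝ) * ((n : ℝ) - 1) * (α / u ^ (2 * n + 2)))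
      + 6 * a₁ * a₅ * b₂ * b₆ * (-1 + (n : ℝ) * (α / u ^ (2 * n + 2))) < 0) := by
  set N : ℝ := (n : ℝ) with hN
  set p : ℝ := α / u ^ (2 * n + 2) with hpdef
  have hNge : (2 : ℝ) ≤ N := by rw [hN]; exact_mod_cast hn
  have hn1 : (0 : ℝ) < N + 1 := by linarith
  have hq : (0 : ℝ) < N / (N + 1) := by positivity
  have hs0 : 0 < Real.sqrt ((n : ℝ) / (n + 1)) := Real.sqrt_pos.2 hq
  have hu0 : 0 < u := lt_of_lt_of_le hs0 (huα.trans hu)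
  have hupow : 0 < u ^ (2 * n + 2) := pow_pos hu0 _
  have hp : 0 < p := div_pos hα0 hupow
  have hspow : Real.sqrt ((n : ℝ) / (n + 1)) ^ (2 * n + 2) = ((n : ℝ) / (n + 1)) ^ (n + 1) := by
    rw [show 2 * n + 2 = 2 * (n + 1) by ring, pow_mul, Real.sq_sqrt hq.le]
  have hupow_ge : ((n : ℝ) / (n + 1)) ^ (n + 1) ≤ u ^ (2 * n + 2) := by
    rw [← hspow]
    exact pow_le_pow_left₀ hs0.le (huα.trans hu) _
  have hNα : N * α < ((n : ℝ) / (n + 1)) ^ (n + 1) := by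
    have h1 : N * α < N * ((1 / (N + 1)) * (N / (N + 1)) ^ n) :=
      (mul_lt_mul_iff_right₀ (by linarith : (0 : ℝ) < N)).2 hα
    have h2 : N * ((1 / (N + 1)) * (N / (N + 1)) ^ n) = (N / (N + 1)) ^ (n + 1) := by
      rw [pow_succ]
      field_simp
    rw [h2] at h1
    exact h1
  have hNp : N * p < 1 := by
    rw [hpdef, ← mul_div_assoc, div_lt_one hupow]
    exact hNα.trans_le hupow_ge
  have hfac : (0:ℝ) ≤ (N - 2) * (N + 1) := mul_nonneg (by linarith) (by linarith)
  have c1 : (0:ℝ) ≤ 2 * N ^ 2 - 2 * N - 4 := by nlinarith [hfac]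
  have c2 : (0:ℝ) ≤ 3 + (2 * N ^ 2 - 2 * N - 1) * p :=
    le_add_of_nonneg_of_le (by linarith) (by nlinarith [mul_nonneg (by nlinarith [hfac] : (0:ℝ) ≤ 2 * N ^ 2 - 2 * N - 1) hp.le])
  have c3 : (0:ℝ) ≤ 3 + (2 * N ^ 2 - N) * p :=
    le_add_of_nonneg_of_le (by linarith) (by nlinarith [mul_nonneg (by nlinarith [hfac] : (0:ℝ) ≤ 2 * N ^ 2 - N) hp.le])
  have c4 : (0:ℝ) ≤ 2 * N ^ 2 + 2 * N := by nlinarith [sq_nonneg N]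
  have hup := key_upper N p a₁ a₅ b₁ b₂ b₃ b₅ b₆ ha hb hab
  have hlo := key_lower N p a₁ a₅ b₁ b₂ b₃ b₅ b₆ ha hb hab
  have h1 : 0 ≤ 3 * (1 - N * p) * (a₁ * b₆ - a₅ * b₂) ^ 2 :=
    mul_nonneg (by linarith) (sq_nonneg _)
  have h2 : 0 ≤ (2 * N ^ 2 - 2 * N - 4) * p * (a₁ * b₂) ^ 2 :=
    mul_nonneg (mul_nonneg c1 hp.le) (sq_nonneg _)
  have h3 : 0 ≤ (3 + (2 * N ^ 2 - 2 * N - 1) * p) * (a₁ * b₃) ^ 2 :=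
    mul_nonneg c2 (sq_nonneg _)
  have h4 : 0 ≤ (3 + (2 * N ^ 2 - N) * p) * ((a₁ * b₅ - a₅ * b₁) ^ 2 + (a₅ * b₃) ^ 2) :=
    mul_nonneg c3 (by positivity)
  have h5 : 0 ≤ (2 * N ^ 2 + 2 * N) * p * ((a₁ * b₆) ^ 2 + (a₅ * b₂) ^ 2) :=
    mul_nonneg (mul_nonneg c4 hp.le) (by positivity)
  have g1 : 0 ≤ 3 * (1 - N * p) * (a₁ * b₂ + a₅ * b₆) ^ 2 :=
    mul_nonneg (by linarith) (sq_nonneg _)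
  have g2 : 0 ≤ (2 * N ^ 2 + 2 * N) * p * (a₅ * b₆) ^ 2 :=
    mul_nonneg (mul_nonneg c4 hp.le) (sq_nonneg _)
  have g3 : 0 ≤ (1 + N) * p * (4 * a₁ ^ 2 * b₂ ^ 2 + a₁ ^ 2 * b₃ ^ 2) :=
    mul_nonneg (mul_nonneg (by linarith) hp.le) (by positivity)
  refine ⟨by linarith, by linarith, by linarith⟩
end
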